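/- For m ≥ 2 and n ≥ 2, the Kazhdan constant of G(m,m,n) with respect to its standard generating set S satisfies κ(G(m,m,n), S) ≤ √( 2|1−ζ_{2m}|² / (2 + ∑_{j=1}^{n−2} |1 + |1−ζ_{2m}| j|²) ). -/

import Mathlib

open Finset Complex

/-- The monomial matrix `[(a₁,…,a_n), σ]` whose `(i, σ(i))` entry is `a i`. -/
def monomialMat {n : ℕ} (a : Fin n → ℂ) (σ : Equiv.Perm (Fin n)) :
    Matrix (Fin n) (Fin n) ℂ :=
  Matrix.of fun i j => if j = σ i then a i else 0

/-- The standard generating set of `G(m,m,n)` as a set of `n×n` complex matrices: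
the adjacent transposition matrices and `[(ζ_m⁻¹, ζ_m, 1,…,1), (1,2)]`. -/
noncomputable def genSetGmmn (m n : ℕ) : Set (Matrix (Fin n) (Fin n) ℂ) :=
  {A | (∃ (i : ℕ) (h : i + 1 < n),
          A = monomialMat (fun _ => 1)
                (Equiv.swap ⟨i, Nat.lt_of_succ_lt h⟩ ⟨i + 1, h⟩)) ∨
       (∃ h : 1 < n,
          A = monomialMat
                (fun k => if (k : ℕ) = 0 then (Complex.exp (2 * Real.pi * I / m))⁻¹
                  else if (k : ℕ) = 1 then Complex.exp (2 * Real.pi * I / m) else 1)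
                (Equiv.swap ⟨0, Nat.lt_of_succ_lt h⟩ ⟨1, h⟩))}

/-- The Kazhdan constant `κ(G,S)`: the infimum, over all unitary representations `π`
without non-zero invariant vectors and all unit vectors `ξ`, of
`sup_{s ∈ S} ‖π(s)ξ − ξ‖`. -/
noncomputable def kazhdanConstant (G : Type*) [Group G] (S : Set G) : ℝ :=
  sInf {r | ∃ (H : Type) (_ : NormedAddCommGroup H) (_ : InnerProductSpace ℂ H)
      (π : G →* (H ≃ₗᵢ[ℂ] H)),
      (∀ ξ : H, (∀ g : G, π g ξ = ξ) → ξ = 0) ∧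
      ∃ ξ : H, ‖ξ‖ = 1 ∧ r = ⨆ s ∈ S, ‖π s ξ - ξ‖}

/-! The natural representation of `G(m,m,n)` on `ℂⁿ` is unitary, since its generators are
monomial matrices with entries of modulus one. It has no non-zero invariant vectors: the
transpositions force an invariant vector to be constant, and the twisted generator, which
multiplies the second coordinate by `ζ_m ≠ 1`, then forces it to vanish.

Put `ω = ζ_{2m}` and `a = |1 - ω|`. The vector
`v = (1, ω, ω(1 + a), ω(1 + 2a), …, ω(1 + (n-2)a))` has consecutive coordinates at distance `a`,
so each transposition moves it by `√2 a`. The twisted generator replaces its first two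
coordinates `(1, ω)` by `(ζ_m⁻¹ ω, ζ_m) = (ω⁻¹, ω²)`, again moving each of them by `a`. Since
`‖v‖² = 2 + ∑_{j=1}^{n-2} |1 + a j|²`, the unit vector `v / ‖v‖` is moved by every generator by
exactly the bound of the theorem. -/

open Matrix

lemma monomialMat_mulVec {n : ℕ} (a : Fin n → ℂ) (σ : Equiv.Perm (Fin n))
    (x : Fin n → ℂ) :
    monomialMat a σ *ᵥ x = fun i => a i * x (σ i) := by
  funext i
  simp [mulVec, monomialMat, dotProduct, ite_mul]

lemma monomialMat_mem_unitary {n : ℕ} {a : Fin n → ℂ} (ha : ∀ i, ‖a i‖ = 1)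
    (σ : Equiv.Perm (Fin n)) : monomialMat a σ ∈ unitary (Matrix (Fin n) (Fin n) ℂ) := by
  rw [← Matrix.unitaryGroup, mem_unitaryGroup_iff]
  ext i j
  simp only [monomialMat, mul_apply, of_apply, star_apply, RCLike.star_def, ite_mul, zero_mul,
    sum_ite_eq', mem_univ, ↓reduceIte, EmbeddingLike.apply_eq_iff_eq, one_apply]
  split_ifs with h
  · subst h
    simp [Complex.mul_conj', ha]
  · simp

lemma norm_sq_monomialMat_swap_mulVec_sub {n : ℕ} {a : Fin n → ℂ} {i j : Fin n}
    (hij : i ≠ j) (ha : ∀ k, k ≠ i → k ≠ j → a k = 1) (x : Fin n → ℂ) :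
    ‖WithLp.toLp 2 (monomialMat a (Equiv.swap i j) *ᵥ x - x)‖ ^ 2 =
      ‖a i * x j - x i‖ ^ 2 + ‖a j * x i - x j‖ ^ 2 := by
  rw [EuclideanSpace.norm_sq_eq]
  refine (Finset.sum_subset (Finset.subset_univ {i, j}) fun k _ hk => ?_).symm.trans ?_
  · simp only [Finset.mem_insert, Finset.mem_singleton, not_or] at hk
    simp [monomialMat_mulVec, Equiv.swap_apply_of_ne_of_ne hk.1 hk.2, ha k hk.1 hk.2]
  · simp [Finset.sum_pair hij, monomialMat_mulVec]

lemma norm_exp_two_pi_I_div (x : ℝ) : ‖Complex.exp (2 * Real.pi * I / x)‖ = 1 := by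
  rw [show 2 * (Real.pi : ℂ) * I / x = ((2 * Real.pi / x : ℝ) : ℂ) * I by push_cast; ring]
  exact Complex.norm_exp_ofReal_mul_I _

lemma exp_two_pi_I_div_two_mul_sq (m : ℕ) :
    Complex.exp (2 * Real.pi * I / (2 * m)) ^ 2 = Complex.exp (2 * Real.pi * I / m) := by
  rw [← Complex.exp_nat_mul]
  congr 1
  push_cast
  ring

lemma genSetGmmn_subset_unitary (m n : ℕ) :
    genSetGmmn m n ⊆ unitary (Matrix (Fin n) (Fin n) ℂ) := by
  rintro A (⟨i, hi, rfl⟩ | ⟨hn, rfl⟩)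
  · exact monomialMat_mem_unitary (fun _ => norm_one) _
  · have hζ : ‖Complex.exp (2 * Real.pi * I / m)‖ = 1 := by
      simpa using norm_exp_two_pi_I_div m
    refine monomialMat_mem_unitary (fun k => ?_) _
    split_ifs <;> simp [hζ]

lemma eq_zero_of_forall_genSetGmmn_mulVec_eq {m n : ℕ} (hm : 2 ≤ m) (hn : 2 ≤ n)
    {x : Fin n → ℂ} (hx : ∀ A ∈ genSetGmmn m n, A *ᵥ x = x) : x = 0 := by
  have hstep (i : ℕ) (hi : i + 1 < n) : x ⟨i + 1, hi⟩ = x ⟨i, by omega⟩ := by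
    simpa [monomialMat_mulVec] using congrFun (hx _ (Or.inl ⟨i, hi, rfl⟩)) ⟨i, by omega⟩
  have hconst (i : ℕ) (hi : i < n) : x ⟨i, hi⟩ = x ⟨0, by omega⟩ := by
    induction i with
    | zero => rfl
    | succ i ih => rw [hstep i hi, ih]
  have hζ : Complex.exp (2 * Real.pi * I / m) ≠ 1 :=
    (Complex.isPrimitiveRoot_exp m (by omega)).ne_one (by omega)
  have h0 : x ⟨0, by omega⟩ = 0 := by
    have := congrFun (hx _ (Or.inr ⟨by omega, rfl⟩)) ⟨1, by omega⟩
    simp only [monomialMat_mulVec, Equiv.swap_apply_right, hstep 0 (by omega), one_ne_zero,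
      if_false, if_true] at this
    exact (mul_left_eq_self₀.mp this).resolve_left hζ
  funext i
  exact (hconst i i.isLt).trans h0

lemma coe_mem_unitary_of_closure_eq_top {G R : Type*} [Group G] [Monoid R] [StarMul R]
    {S : Set G} (hS : Subgroup.closure S = ⊤) (ρ : G →* Rˣ)
    (hρS : ∀ s ∈ S, (ρ s : R) ∈ unitary R) (g : G) : (ρ g : R) ∈ unitary R := by
  have hg : g ∈ Subgroup.closure S := hS ▸ Subgroup.mem_top g
  induction hg using Subgroup.closure_induction with
  | mem s hs => exact hρS s hs
  | one => simp
  | mul g h _ _ hg hh => simpa using mul_mem hg hh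
  | inv g _ hg =>
    rw [map_inv, Units.inv_eq_of_mul_eq_one_left (Unitary.star_mul_self_of_mem hg)]
    exact Unitary.star_mem hg

noncomputable def unitaryRep {G : Type*} [Group G] {n : ℕ}
    (ρ : G →* (Matrix (Fin n) (Fin n) ℂ)ˣ)
    (hρ : ∀ g, (ρ g : Matrix (Fin n) (Fin n) ℂ) ∈ unitary (Matrix (Fin n) (Fin n) ℂ)) :
    G →* (EuclideanSpace ℂ (Fin n) ≃ₗᵢ[ℂ] EuclideanSpace ℂ (Fin n)) where
  toFun g := Unitary.linearIsometryEquiv ⟨toEuclideanCLM (n := Fin n) (𝕜 := ℂ) (ρ g),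
    Unitary.map_mem _ (hρ g)⟩
  map_one' := by
    ext x : 1
    change toEuclideanCLM (n := Fin n) (𝕜 := ℂ) (ρ 1 : Matrix (Fin n) (Fin n) ℂ) x = x
    simp
  map_mul' g h := by
    ext x : 1
    change toEuclideanCLM (n := Fin n) (𝕜 := ℂ) (ρ (g * h) : Matrix (Fin n) (Fin n) ℂ) x =
      toEuclideanCLM (n := Fin n) (𝕜 := ℂ) (ρ g : Matrix (Fin n) (Fin n) ℂ)
        (toEuclideanCLM (n := Fin n) (𝕜 := ℂ) (ρ h : Matrix (Fin n) (Fin n) ℂ) x)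
    simp

lemma kazhdanConstant_le {G : Type*} [Group G] {S : Set G} {H : Type} [NormedAddCommGroup H]
    [InnerProductSpace ℂ H] (π : G →* (H ≃ₗᵢ[ℂ] H))
    (hπ : ∀ ξ : H, (∀ g, π g ξ = ξ) → ξ = 0) {v : H} (hv : v ≠ 0) {c : ℝ}
    (hc : 0 ≤ c)
    (hS : ∀ s ∈ S, ‖π s v - v‖ ≤ c * ‖v‖) : kazhdanConstant G S ≤ c := by
  have hv' : 0 < ‖v‖ := norm_pos_iff.mpr hv
  set ξ : H := (‖v‖⁻¹ : ℂ) • v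
  have hξ : ‖ξ‖ = 1 := by
    rw [norm_smul, norm_inv, Complex.norm_real, Real.norm_of_nonneg hv'.le,
      inv_mul_cancel₀ hv'.ne']
  refine csInf_le_of_le ⟨0, ?_⟩ ⟨H, inferInstance, inferInstance, π, hπ, ξ, hξ, rfl⟩ ?_
  · rintro _ ⟨_, _, _, _, _, _, _, rfl⟩
    exact Real.iSup_nonneg fun _ => Real.iSup_nonneg fun _ => norm_nonneg _
  refine Real.iSup_le (fun s => Real.iSup_le (fun hs => ?_) hc) hc
  rw [map_smul, ← smul_sub, norm_smul, norm_inv, Complex.norm_real, Real.norm_of_nonneg hv'.le,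
    inv_mul_le_iff₀ hv', mul_comm]
  exact hS s hs

noncomputable def witness (ω : ℂ) : ℕ → ℂ
  | 0 => 1
  | k + 1 => ω * (1 + ‖1 - ω‖ * k)

lemma norm_witness_succ_sub {ω : ℂ} (hω : ‖ω‖ = 1) (k : ℕ) :
    ‖witness ω (k + 1) - witness ω k‖ = ‖1 - ω‖ := by
  cases k with
  | zero => simp [witness, norm_sub_rev]
  | succ k =>
    rw [witness, witness, ← mul_sub, norm_mul, hω, one_mul, Nat.cast_succ,
      show ∀ x y : ℂ, 1 + x * (y + 1) - (1 + x * y) = x by intros; ring, norm_real, norm_norm]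

lemma sum_range_norm_sq_witness {ω : ℂ} (hω : ‖ω‖ = 1) (n : ℕ) :
    ∑ k ∈ Finset.range (n + 2), ‖witness ω k‖ ^ 2 =
      2 + ∑ j ∈ Finset.Icc 1 n, ‖1 + (‖1 - ω‖ : ℂ) * j‖ ^ 2 := by
  rw [Finset.sum_range_succ', Finset.sum_range_succ', ← Finset.Ico_add_one_right_eq_Icc,
    Finset.sum_Ico_eq_sum_range]
  simp only [witness, Nat.cast_add, Nat.cast_one, norm_mul, hω, one_mul, Nat.cast_zero, mul_zero,
    add_zero, mul_one, one_pow, norm_one, add_tsub_cancel_right, add_comm 1]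
  ring

lemma norm_sq_genSetGmmn_mulVec_witness_sub {m n : ℕ} {ω : ℂ} (hω : ‖ω‖ = 1)
    (hωζ : ω ^ 2 = Complex.exp (2 * Real.pi * I / m)) {A : Matrix (Fin n) (Fin n) ℂ}
    (hA : A ∈ genSetGmmn m n) :
    ‖WithLp.toLp 2 (A *ᵥ (fun i : Fin n => witness ω i) - fun i : Fin n => witness ω i)‖ ^ 2
      = 2 * ‖1 - ω‖ ^ 2 := by
  rcases hA with ⟨i, hi, rfl⟩ | ⟨hn, rfl⟩
  · rw [norm_sq_monomialMat_swap_mulVec_sub (by simp) (fun _ _ _ => rfl)]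
    simp only [one_mul, norm_sub_rev (witness ω i), norm_witness_succ_sub hω]
    ring
  · rw [norm_sq_monomialMat_swap_mulVec_sub (by simp) fun k hk0 hk1 => ?_]
    · have hω0 : ω ≠ 0 := norm_ne_zero_iff.mp (hω.trans_ne one_ne_zero)
      have h0 : (ω ^ 2)⁻¹ * ω - 1 = ω⁻¹ * (1 - ω) := by field_simp
      have h1 : ω ^ 2 - ω = ω * (ω - 1) := by ring
      simp only [← hωζ, ↓reduceIte, witness, Nat.cast_zero, mul_zero, add_zero, mul_one, h0,
        norm_mul, norm_inv, hω, inv_one, one_mul, one_ne_zero, h1, norm_sub_rev ω]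
      ring
    · simp_all [Fin.ext_iff]

theorem kazhdan_upper_bound_Gmmn_general (m n : ℕ) (hm : 2 ≤ m) (hn : 2 ≤ n)
    (G : Type) [Group G] (S : Set G)
    (hgen : Subgroup.closure S = ⊤)
    (ρ : G →* (Matrix (Fin n) (Fin n) ℂ)ˣ)
    (himg : (fun g => ((ρ g : (Matrix (Fin n) (Fin n) ℂ)ˣ) : Matrix (Fin n) (Fin n) ℂ)) '' S
      = genSetGmmn m n) :
    kazhdanConstant G S ≤
      Real.sqrt (2 * ‖1 - Complex.exp (2 * Real.pi * I / (2 * m))‖ ^ 2 /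
        (2 + ∑ j ∈ Finset.Icc 1 (n - 2),
          ‖1 + ((‖1 - Complex.exp (2 * Real.pi * I / (2 * m))‖ : ℝ) : ℂ)
            * (j : ℂ)‖ ^ 2)) := by
  set ω := Complex.exp (2 * Real.pi * I / (2 * m))
  have hω : ‖ω‖ = 1 := by simpa using norm_exp_two_pi_I_div (2 * m)
  have hρS (s : G) (hs : s ∈ S) : (ρ s : Matrix (Fin n) (Fin n) ℂ) ∈ genSetGmmn m n :=
    himg ▸ ⟨s, hs, rfl⟩
  set π := unitaryRep ρ (coe_mem_unitary_of_closure_eq_top hgen ρ fun s hs =>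
    genSetGmmn_subset_unitary m n (hρS s hs))
  have hπ (ξ : EuclideanSpace ℂ (Fin n)) (hξ : ∀ g, π g ξ = ξ) : ξ = 0 := by
    refine congrArg (WithLp.toLp 2) (eq_zero_of_forall_genSetGmmn_mulVec_eq hm hn fun A hA => ?_)
    obtain ⟨s, -, rfl⟩ := himg ▸ hA
    exact congrArg WithLp.ofLp (hξ s)
  set w : EuclideanSpace ℂ (Fin n) := WithLp.toLp 2 fun i => witness ω i
  have hw : ‖w‖ ^ 2 = 2 + ∑ j ∈ Finset.Icc 1 (n - 2), ‖1 + (‖1 - ω‖ : ℂ) * j‖ ^ 2 := by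
    rw [EuclideanSpace.norm_sq_eq, ← sum_range_norm_sq_witness hω, Nat.sub_add_cancel hn]
    exact Fin.sum_univ_eq_sum_range (fun k => ‖witness ω k‖ ^ 2) n
  have hw0 : w ≠ 0 := by
    rintro h
    have : (0 : ℝ) < ‖w‖ ^ 2 := hw ▸ by positivity
    simp [h] at this
  refine kazhdanConstant_le π hπ hw0 (Real.sqrt_nonneg _) fun s hs => ?_
  rw [← Real.sqrt_sq (norm_nonneg (π s w - w)), ← Real.sqrt_sq (norm_nonneg w),
    ← Real.sqrt_mul (by positivity), ← hw, div_mul_cancel₀ _ (by positivity)]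
  exact Real.sqrt_le_sqrt
    (norm_sq_genSetGmmn_mulVec_witness_sub hω (exp_two_pi_I_div_two_mul_sq m) (hρS s hs)).le

/-- For `m ≥ 2` and `n ≥ 2`, the Kazhdan constant of `G(m,m,n)`
(realized as any abstract group `G` with generating set `S` carried isomorphically to the
standard generating matrices of `G(m,m,n)`) satisfies
`κ(G(m,m,n), S) ≤ √(2|1−ζ_{2m}|² / (2 + ∑_{j=1}^{n−2} |1 + |1−ζ_{2m}| j|²))`. -/
theorem kazhdan_upper_bound_Gmmn (m n : ℕ) (hm : 2 ≤ m) (hn : 2 ≤ n)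
    (G : Type) [Group G] (S : Set G)
    (hgen : Subgroup.closure S = ⊤)
    (ρ : G →* (Matrix (Fin n) (Fin n) ℂ)ˣ)
    (hinj : Function.Injective ρ)
    (himg : (fun g => ((ρ g : (Matrix (Fin n) (Fin n) ℂ)ˣ) : Matrix (Fin n) (Fin n) ℂ)) '' S
      = genSetGmmn m n) :
    kazhdanConstant G S ≤
      Real.sqrt (2 * ‖1 - Complex.exp (2 * Real.pi * I / (2 * m))‖ ^ 2 /
        (2 + ∑ j ∈ Finset.Icc 1 (n - 2),
          ‖1 + ((‖1 - Complex.exp (2 * Real.pi * I / (2 * m))‖ : ℝ) : ℂ)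
            * (j : ℂ)‖ ^ 2)) :=
  kazhdan_upper_bound_Gmmn_general m n hm hn G S hgen ρ himg
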